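/- arXiv:1309.7910 — 2 statements merged into one kernel-verified Lean document; each statement's English description precedes it below -/
import Mathlib

section
/- For every x ∈ X^M and every p ∈ {1, 2, ∞}, the Hessian matrix U_c''(x) of the coupled potential satisfies ‖U_c''(x)‖_p ≤ K_{f,g}, where K_{f,g} = ‖g''‖_∞ · x_max + ‖g'‖_∞ + ‖f'‖_∞ · ‖g'‖_∞², ‖·‖_p denotes the matrix operator norm induced by the vector p-norm, and ‖f'‖_∞, ‖g'‖_∞, ‖g''‖_∞ denote the suprema of |f'|, |g'|, |g''| over their respective domains. -/
/-!
On the open box `(0, x_max)^M` the potential is differentiable with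
`∂ᵢU_c(x) = g'(xᵢ) (xᵢ - (Aᵀ f(A g(x)))ᵢ)`. The closed box is convex with nonempty interior, so
wherever this partial derivative is differentiable its derivative is the one-sided derivative of
the formula; elsewhere the Hessian entry is `0`. Hence
`U_c'' = diag(g''(x) ⊙ (x - Aᵀ f(A g(x))) + g'(x)) - diag(g'(x)) Aᵀ diag(f'(A g(x))) A diag(g'(x))`,
and since `x` and `Aᵀ f(A g(x))` both lie in `[0, x_max]`, entrywise
`|U_c''| ≤ (‖g''‖ x_max + ‖g'‖) I + ‖f'‖ ‖g'‖² AᵀA`. As `A ≥ 0` has unit row sums and column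
sums at most `1`, every row and every column of this bound sums to at most `K_{f,g}`, which gives
the `1`- and `∞`-norm bounds and, by the Schur test, the `2`-norm bound.
-/

open Set Filter

/-- The coupling matrix `A` of size `N × M` with `M = N + w − 1`. -/
noncomputable def Amat (w N : ℕ) (j : Fin N) (k : Fin (N + w - 1)) : ℝ :=
  if (j : ℕ) ≤ (k : ℕ) ∧ (k : ℕ) < (j : ℕ) + w then (w : ℝ)⁻¹ else 0

/-- The coupled potential `U_c(x) = g(x)ᵀx − G(x) − F(A g(x))`. -/
noncomputable def Uc (w N : ℕ) (f g : ℝ → ℝ) (x : Fin (N + w - 1) → ℝ) : ℝ :=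
  (∑ i, (g (x i) * x i - ∫ z in (0:ℝ)..(x i), g z))
    - ∑ j : Fin N, ∫ z in (0:ℝ)..(∑ k, Amat w N j k * g (x k)), f z

open Finset Matrix Topology

section MatrixNormBounds

variable {ι κ : Type*} [Fintype κ] (H : Matrix ι κ ℝ) (v : κ → ℝ) {K : ℝ}

lemma abs_mulVec_le_sum_abs_mul (m : ι) : |H.mulVec v m| ≤ ∑ i, |H m i| * |v i| :=
  (abs_sum_le_sum_abs _ _).trans_eq (by simp only [abs_mul])

lemma abs_mulVec_le_mul_iSup (hrow : ∀ m, ∑ i, |H m i| ≤ K) (m : ι) :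
    |H.mulVec v m| ≤ K * ⨆ j, |v j| := by
  have hbdd : BddAbove (Set.range fun j => |v j|) := (Set.finite_range _).bddAbove
  calc |H.mulVec v m| ≤ ∑ i, |H m i| * |v i| := abs_mulVec_le_sum_abs_mul H v m
    _ ≤ ∑ i, |H m i| * ⨆ j, |v j| := by gcongr with i; exact le_ciSup hbdd i
    _ = (∑ i, |H m i|) * ⨆ j, |v j| := (sum_mul ..).symm
    _ ≤ K * ⨆ j, |v j| := by
      gcongr
      · exact Real.iSup_nonneg fun j => abs_nonneg _
      · exact hrow m

variable [Fintype ι]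

lemma sum_abs_mulVec_le (hcol : ∀ i, ∑ m, |H m i| ≤ K) :
    ∑ m, |H.mulVec v m| ≤ K * ∑ i, |v i| :=
  calc ∑ m, |H.mulVec v m| ≤ ∑ m, ∑ i, |H m i| * |v i| :=
        sum_le_sum fun m _ => abs_mulVec_le_sum_abs_mul H v m
    _ = ∑ i, (∑ m, |H m i|) * |v i| := by rw [sum_comm]; simp_rw [sum_mul]
    _ ≤ ∑ i, K * |v i| := by gcongr with i; exact hcol i
    _ = K * ∑ i, |v i| := (mul_sum ..).symm

lemma sqrt_sum_sq_mulVec_le (hK : 0 ≤ K) (hrow : ∀ m, ∑ i, |H m i| ≤ K)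
    (hcol : ∀ i, ∑ m, |H m i| ≤ K) :
    √(∑ m, (H.mulVec v m) ^ 2) ≤ K * √(∑ i, v i ^ 2) := by
  have hrow_sq (m : ι) : (H.mulVec v m) ^ 2 ≤ K * ∑ i, |H m i| * v i ^ 2 :=
    calc (H.mulVec v m) ^ 2 ≤ (∑ i, |H m i| * |v i|) ^ 2 := by
          rw [← sq_abs]; gcongr; exact abs_mulVec_le_sum_abs_mul H v m
      _ ≤ (∑ i, |H m i|) * ∑ i, |H m i| * v i ^ 2 :=
          sum_sq_le_sum_mul_sum_of_sq_le_mul _ (fun i _ => abs_nonneg _)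
            (fun i _ => by positivity) fun i _ => le_of_eq (by rw [mul_pow, sq_abs (v i)]; ring)
      _ ≤ K * ∑ i, |H m i| * v i ^ 2 := by gcongr; exact hrow m
  have hsq : ∑ m, (H.mulVec v m) ^ 2 ≤ (K * √(∑ i, v i ^ 2)) ^ 2 :=
    calc ∑ m, (H.mulVec v m) ^ 2 ≤ ∑ m, K * ∑ i, |H m i| * v i ^ 2 :=
          sum_le_sum fun m _ => hrow_sq m
      _ = K * ∑ i, (∑ m, |H m i|) * v i ^ 2 := by
          rw [← mul_sum, sum_comm]; simp_rw [sum_mul]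
      _ ≤ K * ∑ i, K * v i ^ 2 := by gcongr with i; exact hcol i
      _ = (K * √(∑ i, v i ^ 2)) ^ 2 := by
          rw [mul_pow, Real.sq_sqrt (by positivity), ← mul_sum, sq K, mul_assoc]
  exact (Real.sqrt_le_sqrt hsq).trans_eq (Real.sqrt_sq (by positivity))

end MatrixNormBounds

section StochasticMatrix

variable {ι κ : Type*} {A : Matrix κ ι ℝ}

lemma abs_sum_mul_le [Fintype κ] {w u : κ → ℝ} {K : ℝ} (hw : ∀ j, 0 ≤ w j)
    (hu : ∀ j, |u j| ≤ K) : |∑ j, w j * u j| ≤ K * ∑ j, w j :=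
  calc |∑ j, w j * u j| ≤ ∑ j, w j * |u j| := (abs_sum_le_sum_abs _ _).trans_eq
        (sum_congr rfl fun j _ => by rw [abs_mul, abs_of_nonneg (hw j)])
    _ ≤ ∑ j, w j * K := by gcongr with j; exacts [hw j, hu j]
    _ = K * ∑ j, w j := by rw [← sum_mul, mul_comm]

lemma Convex.mulVec_mem [Fintype ι] {s : Set ℝ} (hs : Convex ℝ s) (hA0 : ∀ j k, 0 ≤ A j k)
    (hA1 : ∀ j, ∑ k, A j k = 1) {u : ι → ℝ} (hu : ∀ k, u k ∈ s) (j : κ) : (A *ᵥ u) j ∈ s :=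
  hs.sum_mem (fun k _ => hA0 j k) (hA1 j) fun k _ => hu k

lemma vecMul_mem_Icc [Fintype κ] {c : ℝ} (hc : 0 ≤ c) (hA0 : ∀ j k, 0 ≤ A j k)
    (hAcol : ∀ k, ∑ j, A j k ≤ 1) {u : κ → ℝ} (hu : ∀ j, u j ∈ Icc 0 c) (i : ι) :
    (u ᵥ* A) i ∈ Icc 0 c :=
  ⟨sum_nonneg fun j _ => mul_nonneg (hu j).1 (hA0 j i),
    calc (u ᵥ* A) i ≤ ∑ j, c * A j i :=
          sum_le_sum fun j _ => mul_le_mul_of_nonneg_right (hu j).2 (hA0 j i)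
      _ = c * ∑ j, A j i := (mul_sum ..).symm
      _ ≤ c := mul_le_of_le_one_right hc (hAcol i)⟩

lemma sum_abs_le_of_abs_le_diag_add_gram [Fintype ι] [Fintype κ] [DecidableEq ι]
    (hA1 : ∀ j, ∑ k, A j k = 1) (hAcol : ∀ k, ∑ j, A j k ≤ 1) {c d : ℝ} (hd : 0 ≤ d)
    {H : Matrix ι ι ℝ} (hH : ∀ m i, |H m i| ≤ (if i = m then c else 0) + d * ∑ j, A j i * A j m) :
    (∀ m, ∑ i, |H m i| ≤ c + d) ∧ ∀ i, ∑ m, |H m i| ≤ c + d := by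
  have hsum (m : ι) : ∑ i, ((if i = m then c else 0) + d * ∑ j, A j i * A j m) ≤ c + d :=
    calc _ = c + d * ∑ j, A j m * ∑ i, A j i := by
          rw [sum_add_distrib, sum_ite_eq', if_pos (Finset.mem_univ m), ← mul_sum, sum_comm]
          simp_rw [mul_sum, mul_comm]
      _ = c + d * ∑ j, A j m := by simp only [hA1, mul_one]
      _ ≤ c + d := by gcongr; exact mul_le_of_le_one_right hd (hAcol m)
  have hsymm (m i : ι) : (if i = m then c else 0) + d * ∑ j, A j i * A j m
      = (if m = i then c else 0) + d * ∑ j, A j m * A j i := by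
    rw [sum_congr rfl fun j _ => mul_comm (A j i) (A j m)]
    simp only [@eq_comm _ i m]
  exact ⟨fun m => (sum_le_sum fun i _ => hH m i).trans (hsum m),
    fun i => (sum_le_sum fun m _ => (hH m i).trans_eq (hsymm m i)).trans (hsum i)⟩

end StochasticMatrix

lemma abs_le_sSup_image_abs {s : Set ℝ} {h : ℝ → ℝ} (hs : IsCompact s) (hh : ContinuousOn h s)
    {t : ℝ} (ht : t ∈ s) : |h t| ≤ sSup ((fun u => |h u|) '' s) :=
  le_csSup (hs.image_of_continuousOn hh.abs).bddAbove (mem_image_of_mem _ ht)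

lemma hasDerivAt_integral_of_mem_Ioo {f : ℝ → ℝ} {a b t : ℝ} (hf : ContinuousOn f (Icc a b))
    (ht : t ∈ Ioo a b) : HasDerivAt (fun u => ∫ z in a..u, f z) (f t) t :=
  intervalIntegral.integral_hasDerivAt_right
    (hf.mono (by rw [uIcc_of_le ht.1.le]; exact Icc_subset_Icc_right ht.2.le)).intervalIntegrable
    ((hf.mono Ioo_subset_Icc_self).stronglyMeasurableAtFilter isOpen_Ioo t ht)
    (hf.continuousAt (Icc_mem_nhds ht.1 ht.2))

theorem fderiv_eq_of_eqOn_interior_of_hasFDerivWithinAt {E F : Type*} [NormedAddCommGroup E]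
    [NormedSpace ℝ E] [NormedAddCommGroup F] [NormedSpace ℝ F] {φ ψ : E → F} {L : E →L[ℝ] F}
    {s : Set E} {x : E} (hs : Convex ℝ s) (hs' : (interior s).Nonempty) (hx : x ∈ s)
    (heq : EqOn φ ψ (interior s)) (hψ : HasFDerivWithinAt ψ L s x)
    (hφ : DifferentiableAt ℝ φ x) :
    fderiv ℝ φ x = L := by
  have hx' : x ∈ closure (interior s) := by
    rw [hs.closure_interior_eq_closure_of_nonempty_interior hs']
    exact subset_closure hx
  have : (𝓝[interior s] x).NeBot := mem_closure_iff_nhdsWithin_neBot.1 hx'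
  have hφψ : φ x = ψ x := tendsto_nhds_unique_of_eventuallyEq
    hφ.continuousAt.continuousWithinAt (hψ.continuousWithinAt.mono interior_subset)
    (eventually_mem_nhdsWithin.mono heq)
  exact (uniqueDiffWithinAt_convex hs.interior (by rwa [interior_interior]) hx').eq
    hφ.hasFDerivAt.hasFDerivWithinAt ((hψ.mono interior_subset).congr heq hφψ)

section CoupledPotential

local notation "proj" => ContinuousLinearMap.proj (R := ℝ) (φ := fun _ => ℝ)

variable {ι κ : Type*} [Fintype ι] {A : Matrix κ ι ℝ} {f g : ℝ → ℝ} {xmax ymax : ℝ}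

lemma hasFDerivWithinAt_mulVec_comp {s : Set ℝ} (hg : DifferentiableOn ℝ g s) {x : ι → ℝ}
    (hx : x ∈ univ.pi fun _ => s) (j : κ) :
    HasFDerivWithinAt (fun z => (A *ᵥ (g ∘ z)) j)
      (∑ k, (A j k * derivWithin g s (x k)) • proj k) (univ.pi fun _ => s) x := by
  have hk (k : ι) := ((hg (x k) (hx k trivial)).hasDerivWithinAt.comp_hasFDerivWithinAt x
    (hasFDerivWithinAt_apply (𝕜 := ℝ) k x _)
    fun z (hz : z ∈ univ.pi fun _ => s) => hz k trivial).const_mul (A j k)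
  simp_rw [smul_smul] at hk
  exact HasFDerivWithinAt.fun_sum fun k _ => hk k

variable [Fintype κ]

noncomputable def coupledPotential (A : Matrix κ ι ℝ) (f g : ℝ → ℝ) (x : ι → ℝ) : ℝ :=
  ∑ i, (g (x i) * x i - ∫ z in (0:ℝ)..x i, g z) - ∑ j, ∫ z in (0:ℝ)..(A *ᵥ (g ∘ x)) j, f z

lemma Uc_eq_coupledPotential (w N : ℕ) (f g : ℝ → ℝ) :
    Uc w N f g = coupledPotential (Amat w N) f g :=
  rfl

noncomputable def coupledGradient (A : Matrix κ ι ℝ) (f g : ℝ → ℝ) (xmax : ℝ) (y : ι → ℝ)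
    (i : ι) : ℝ :=
  derivWithin g (Icc 0 xmax) (y i) * (y i - ((f ∘ (A *ᵥ (g ∘ y))) ᵥ* A) i)

lemma hasFDerivAt_coupledPotential (hA0 : ∀ j k, 0 ≤ A j k) (hA1 : ∀ j, ∑ k, A j k = 1)
    (hf : ContinuousOn f (Icc 0 ymax)) (hg : DifferentiableOn ℝ g (Icc 0 xmax))
    (hg_Ioo : MapsTo g (Ioo 0 xmax) (Ioo 0 ymax)) {y : ι → ℝ} (hy : ∀ i, y i ∈ Ioo 0 xmax) :
    HasFDerivAt (coupledPotential A f g)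
      (∑ i, (derivWithin g (Icc 0 xmax) (y i) * y i) • proj i
        - ∑ j, f ((A *ᵥ (g ∘ y)) j) •
            ∑ k, (A j k * derivWithin g (Icc 0 xmax) (y k)) • proj k) y := by
  have hbox : (univ.pi fun _ : ι => Icc 0 xmax) ∈ 𝓝 y :=
    set_pi_mem_nhds finite_univ fun i _ => Icc_mem_nhds (hy i).1 (hy i).2
  have hg' (i : ι) : HasDerivAt g (derivWithin g (Icc 0 xmax) (y i)) (y i) :=
    (hg _ (Ioo_subset_Icc_self (hy i))).hasDerivWithinAt.hasDerivAt
      (Icc_mem_nhds (hy i).1 (hy i).2)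
  have hΦ (i : ι) : HasDerivAt (fun t => g t * t - ∫ u in (0:ℝ)..t, g u)
      (derivWithin g (Icc 0 xmax) (y i) * y i) (y i) :=
    (((hg' i).mul (hasDerivAt_id' _)).sub
      (hasDerivAt_integral_of_mem_Ioo hg.continuousOn (hy i))).congr_deriv (by ring)
  have hF (j : κ) :=
    ((hasDerivAt_integral_of_mem_Ioo hf ((convex_Ioo 0 ymax).mulVec_mem hA0 hA1
      (fun k => hg_Ioo (hy k)) j)).comp_hasFDerivWithinAt (f := fun z => (A *ᵥ (g ∘ z)) j) y
      (hasFDerivWithinAt_mulVec_comp hg (fun i _ => Ioo_subset_Icc_self (hy i)) j)).hasFDerivAt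
      hbox
  exact (HasFDerivAt.fun_sum fun i _ =>
    (hΦ i).comp_hasFDerivAt y (hasFDerivAt_apply (𝕜 := ℝ) i y)).sub
    (HasFDerivAt.fun_sum fun j _ => hF j)

lemma fderiv_coupledPotential_apply_single [DecidableEq ι] (hA0 : ∀ j k, 0 ≤ A j k)
    (hA1 : ∀ j, ∑ k, A j k = 1) (hf : ContinuousOn f (Icc 0 ymax))
    (hg : DifferentiableOn ℝ g (Icc 0 xmax)) (hg_Ioo : MapsTo g (Ioo 0 xmax) (Ioo 0 ymax))
    {y : ι → ℝ} (hy : ∀ i, y i ∈ Ioo 0 xmax) (i : ι) :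
    fderiv ℝ (coupledPotential A f g) y (Pi.single i 1) = coupledGradient A f g xmax y i := by
  rw [(hasFDerivAt_coupledPotential hA0 hA1 hf hg hg_Ioo hy).fderiv]
  simp only [_root_.sub_apply, _root_.sum_apply, _root_.smul_apply,
    ContinuousLinearMap.proj_apply, Pi.single_apply, smul_eq_mul, mul_ite, mul_one, mul_zero,
    sum_ite_eq', Finset.mem_univ, ↓reduceIte, vecMul, dotProduct, Function.comp_apply,
    coupledGradient]
  rw [mul_sub, mul_sum]
  congr 1
  exact sum_congr rfl fun j _ => by ring

lemma hasFDerivWithinAt_vecMul_comp_mulVec_comp (hA0 : ∀ j k, 0 ≤ A j k)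
    (hA1 : ∀ j, ∑ k, A j k = 1) (hf : DifferentiableOn ℝ f (Icc 0 ymax))
    (hg : DifferentiableOn ℝ g (Icc 0 xmax)) (hg_maps : MapsTo g (Icc 0 xmax) (Icc 0 ymax))
    {x : ι → ℝ} (hx : x ∈ univ.pi fun _ => Icc 0 xmax) (i : ι) :
    HasFDerivWithinAt (fun z => ((f ∘ (A *ᵥ (g ∘ z))) ᵥ* A) i)
      (∑ j, A j i • derivWithin f (Icc 0 ymax) ((A *ᵥ (g ∘ x)) j) •
        ∑ k, (A j k * derivWithin g (Icc 0 xmax) (x k)) • proj k)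
      (univ.pi fun _ => Icc 0 xmax) x := by
  have hB (j : κ) :
      MapsTo (fun z => (A *ᵥ (g ∘ z)) j) (univ.pi fun _ => Icc 0 xmax) (Icc 0 ymax) :=
    fun z hz => (convex_Icc 0 ymax).mulVec_mem hA0 hA1 (fun k => hg_maps (hz k trivial)) j
  exact HasFDerivWithinAt.fun_sum fun j _ =>
    ((hf _ (hB j hx)).hasDerivWithinAt.comp_hasFDerivWithinAt x
      (hasFDerivWithinAt_mulVec_comp hg hx j) (hB j)).mul_const (A j i)

lemma hasFDerivWithinAt_coupledGradient (hA0 : ∀ j k, 0 ≤ A j k)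
    (hA1 : ∀ j, ∑ k, A j k = 1) (hf : DifferentiableOn ℝ f (Icc 0 ymax))
    (hg : DifferentiableOn ℝ g (Icc 0 xmax))
    (hg' : DifferentiableOn ℝ (derivWithin g (Icc 0 xmax)) (Icc 0 xmax))
    (hg_maps : MapsTo g (Icc 0 xmax) (Icc 0 ymax))
    {x : ι → ℝ} (hx : x ∈ univ.pi fun _ => Icc 0 xmax) (i : ι) :
    HasFDerivWithinAt (coupledGradient A f g xmax · i)
      (derivWithin g (Icc 0 xmax) (x i) •
          (proj i - ∑ j, A j i • derivWithin f (Icc 0 ymax) ((A *ᵥ (g ∘ x)) j) •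
            ∑ k, (A j k * derivWithin g (Icc 0 xmax) (x k)) • proj k) +
        (x i - ((f ∘ (A *ᵥ (g ∘ x))) ᵥ* A) i) •
          derivWithin (derivWithin g (Icc 0 xmax)) (Icc 0 xmax) (x i) • proj i)
      (univ.pi fun _ => Icc 0 xmax) x := by
  have hgi : HasFDerivWithinAt (fun z : ι → ℝ => derivWithin g (Icc 0 xmax) (z i))
      (derivWithin (derivWithin g (Icc 0 xmax)) (Icc 0 xmax) (x i) • proj i)
      (univ.pi fun _ => Icc 0 xmax) x := by
    exact (hg' (x i) (hx i trivial)).hasDerivWithinAt.comp_hasFDerivWithinAt x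
      (hasFDerivWithinAt_apply (𝕜 := ℝ) i x (univ.pi fun _ => Icc 0 xmax))
      fun _ hz => hz i trivial
  exact hgi.mul ((hasFDerivWithinAt_apply (𝕜 := ℝ) i x _).sub
    (hasFDerivWithinAt_vecMul_comp_mulVec_comp hA0 hA1 hf hg hg_maps hx i))

lemma fderiv_fderiv_coupledPotential_apply_single [DecidableEq ι] (hxmax : 0 < xmax)
    (hA0 : ∀ j k, 0 ≤ A j k) (hA1 : ∀ j, ∑ k, A j k = 1) (hf : DifferentiableOn ℝ f (Icc 0 ymax))
    (hg : DifferentiableOn ℝ g (Icc 0 xmax))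
    (hg' : DifferentiableOn ℝ (derivWithin g (Icc 0 xmax)) (Icc 0 xmax))
    (hg_maps : MapsTo g (Icc 0 xmax) (Icc 0 ymax)) (hg_Ioo : MapsTo g (Ioo 0 xmax) (Ioo 0 ymax))
    {x : ι → ℝ} (hx : x ∈ univ.pi fun _ => Icc 0 xmax) {i : ι}
    (hdiff : DifferentiableAt ℝ (fun y => fderiv ℝ (coupledPotential A f g) y (Pi.single i 1)) x)
    (m : ι) :
    fderiv ℝ (fun y => fderiv ℝ (coupledPotential A f g) y (Pi.single i 1)) x (Pi.single m 1) =
      derivWithin g (Icc 0 xmax) (x i) * ((if i = m then 1 else 0) -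
          derivWithin g (Icc 0 xmax) (x m) *
            ∑ j, A j i * A j m * derivWithin f (Icc 0 ymax) ((A *ᵥ (g ∘ x)) j))
        + if i = m then (x i - ((f ∘ (A *ᵥ (g ∘ x))) ᵥ* A) i) *
          derivWithin (derivWithin g (Icc 0 xmax)) (Icc 0 xmax) (x i) else 0 := by
  have hint : interior (univ.pi fun _ : ι => Icc 0 xmax) = univ.pi fun _ => Ioo 0 xmax := by
    rw [interior_pi_set finite_univ]; simp only [interior_Icc]
  rw [fderiv_eq_of_eqOn_interior_of_hasFDerivWithinAt (convex_pi fun _ _ => convex_Icc 0 xmax)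
    (hint ▸ univ_pi_nonempty_iff.2 fun _ => nonempty_Ioo.2 hxmax) hx (fun y hy => ?_)
    (hasFDerivWithinAt_coupledGradient hA0 hA1 hf hg hg' hg_maps hx i) hdiff]
  · simp only [_root_.add_apply, _root_.smul_apply, _root_.sub_apply,
      ContinuousLinearMap.proj_apply, Pi.single_apply, _root_.sum_apply, smul_eq_mul, mul_ite,
      mul_one, mul_zero, sum_ite_eq', Finset.mem_univ, ↓reduceIte, mul_sum]
    congr 3
    exact sum_congr rfl fun j _ => by ring
  · rw [hint] at hy
    exact fderiv_coupledPotential_apply_single hA0 hA1 hf.continuousOn hg hg_Ioo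
      (fun k => hy k trivial) i

lemma abs_fderiv_fderiv_coupledPotential_apply_single_le [DecidableEq ι] (hxmax : 0 < xmax)
    (hA0 : ∀ j k, 0 ≤ A j k) (hA1 : ∀ j, ∑ k, A j k = 1) (hAcol : ∀ k, ∑ j, A j k ≤ 1)
    (hf : DifferentiableOn ℝ f (Icc 0 ymax)) (hf_maps : MapsTo f (Icc 0 ymax) (Icc 0 xmax))
    (hg : DifferentiableOn ℝ g (Icc 0 xmax))
    (hg' : DifferentiableOn ℝ (derivWithin g (Icc 0 xmax)) (Icc 0 xmax))
    (hg_maps : MapsTo g (Icc 0 xmax) (Icc 0 ymax)) (hg_Ioo : MapsTo g (Ioo 0 xmax) (Ioo 0 ymax))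
    {Kf' Kg' Kg'' : ℝ} (hKf' : 0 ≤ Kf')
    (hbf : ∀ t ∈ Icc 0 ymax, |derivWithin f (Icc 0 ymax) t| ≤ Kf')
    (hbg : ∀ t ∈ Icc 0 xmax, |derivWithin g (Icc 0 xmax) t| ≤ Kg')
    (hbg' : ∀ t ∈ Icc 0 xmax, |derivWithin (derivWithin g (Icc 0 xmax)) (Icc 0 xmax) t| ≤ Kg'')
    {x : ι → ℝ} (hx : x ∈ univ.pi fun _ => Icc 0 xmax) (m i : ι) :
    |fderiv ℝ (fun y => fderiv ℝ (coupledPotential A f g) y (Pi.single i 1)) x (Pi.single m 1)|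
      ≤ (if i = m then Kg'' * xmax + Kg' else 0) + Kf' * Kg' ^ 2 * ∑ j, A j i * A j m := by
  have hgi := hbg _ (hx i trivial)
  have hgm := hbg _ (hx m trivial)
  have hg'i := hbg' _ (hx i trivial)
  have hKg' : 0 ≤ Kg' := (abs_nonneg _).trans hgi
  have hKg'' : 0 ≤ Kg'' := (abs_nonneg _).trans hg'i
  have hAA : ∀ j, 0 ≤ A j i * A j m := fun j => mul_nonneg (hA0 j i) (hA0 j m)
  by_cases hdiff : DifferentiableAt ℝ
    (fun y => fderiv ℝ (coupledPotential A f g) y (Pi.single i 1)) x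
  swap
  · rw [fderiv_zero_of_not_differentiableAt hdiff, _root_.zero_apply, abs_zero]
    exact add_nonneg (by split_ifs <;> positivity)
      (mul_nonneg (by positivity) (sum_nonneg fun j _ => hAA j))
  rw [fderiv_fderiv_coupledPotential_apply_single hxmax hA0 hA1 hf hg hg' hg_maps hg_Ioo hx hdiff]
  have hB (j : κ) : (A *ᵥ (g ∘ x)) j ∈ Icc 0 ymax :=
    (convex_Icc 0 ymax).mulVec_mem hA0 hA1 (fun k => hg_maps (hx k trivial)) j
  set S := ∑ j, A j i * A j m * derivWithin f (Icc 0 ymax) ((A *ᵥ (g ∘ x)) j)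
  have hS : |S| ≤ Kf' * ∑ j, A j i * A j m := abs_sum_mul_le hAA fun j => hbf _ (hB j)
  have hgS : |derivWithin g (Icc 0 xmax) (x m) * S| ≤ Kg' * (Kf' * ∑ j, A j i * A j m) := by
    rw [abs_mul]; gcongr
  split_ifs with him
  · subst him
    have hT : |x i - ((f ∘ (A *ᵥ (g ∘ x))) ᵥ* A) i| ≤ xmax := by
      have := Real.dist_le_of_mem_Icc (hx i trivial)
        (vecMul_mem_Icc hxmax.le hA0 hAcol (fun j => hf_maps (hB j)) i)
      rwa [Real.dist_eq, sub_zero] at this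
    calc _ ≤ |derivWithin g (Icc 0 xmax) (x i)| * (1 + |derivWithin g (Icc 0 xmax) (x i) * S|)
          + |x i - ((f ∘ (A *ᵥ (g ∘ x))) ᵥ* A) i| *
            |derivWithin (derivWithin g (Icc 0 xmax)) (Icc 0 xmax) (x i)| := by
          refine (abs_add_le _ _).trans ?_
          rw [abs_mul, abs_mul]
          gcongr
          exact (abs_sub _ _).trans_eq (by rw [abs_one])
      _ ≤ Kg' * (1 + Kg' * (Kf' * ∑ j, A j i * A j i)) + xmax * Kg'' := by gcongr
      _ = _ := by ring
  · rw [zero_sub, add_zero, mul_neg, abs_neg, abs_mul, zero_add]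
    calc _ ≤ Kg' * (Kg' * (Kf' * ∑ j, A j i * A j m)) := by gcongr
      _ = _ := by ring

end CoupledPotential

section Amat

variable {w N : ℕ}

lemma Amat_nonneg (j : Fin N) (k : Fin (N + w - 1)) : 0 ≤ Amat w N j k := by
  unfold Amat; split <;> positivity

lemma Amat_row_sum (hw : 1 ≤ w) (j : Fin N) : ∑ k, Amat w N j k = 1 := by
  unfold Amat
  rw [Fin.sum_univ_eq_sum_range (fun k => if (j : ℕ) ≤ k ∧ k < j + w then (w : ℝ)⁻¹ else 0),
    ← sum_filter, sum_const, nsmul_eq_mul]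
  have hwindow : (range (N + w - 1)).filter (fun k => (j : ℕ) ≤ k ∧ k < j + w)
      = Finset.Ico (j : ℕ) (j + w) := by
    ext k
    simp only [Finset.mem_filter, Finset.mem_range, Finset.mem_Ico]
    have := j.2
    omega
  rw [hwindow, Nat.card_Ico, Nat.add_sub_cancel_left]
  field_simp

lemma Amat_col_sum_le (k : Fin (N + w - 1)) : ∑ j, Amat w N j k ≤ 1 := by
  unfold Amat
  rw [Fin.sum_univ_eq_sum_range (fun j => if j ≤ (k : ℕ) ∧ (k : ℕ) < j + w then (w : ℝ)⁻¹ else 0),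
    ← sum_filter, sum_const, nsmul_eq_mul]
  have hwindow : (range N).filter (fun j => j ≤ (k : ℕ) ∧ (k : ℕ) < j + w)
      ⊆ Finset.Ico (k + 1 - w) (k + 1) := by
    intro j
    simp only [Finset.mem_filter, Finset.mem_range, Finset.mem_Ico]
    omega
  have hcard := (Finset.card_le_card hwindow).trans (Nat.card_Ico _ _).le
  calc _ ≤ (w : ℝ) * (w : ℝ)⁻¹ := by gcongr; exact_mod_cast hcard.trans (by omega)
    _ ≤ 1 := mul_inv_le_one

end Amat

theorem stmt_11_general
    (xmax ymax : ℝ) (hxmax : 0 < xmax) (hymax : 0 < ymax)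
    (f g : ℝ → ℝ)
    (hf_maps : Set.MapsTo f (Set.Icc 0 ymax) (Set.Icc 0 xmax))
    (hf_C1 : ContDiffOn ℝ 1 f (Set.Icc 0 ymax))
    (hg_maps : Set.MapsTo g (Set.Icc 0 xmax) (Set.Icc 0 ymax))
    (hg_strict : StrictMonoOn g (Set.Icc 0 xmax))
    (hg_C2 : ContDiffOn ℝ 2 g (Set.Icc 0 xmax))
    (hg_top : g xmax = ymax)
    (w N : ℕ) (hw : 1 ≤ w)
    (Kf' Kg' Kg'' K : ℝ)
    (hKf' : Kf' = sSup ((fun y => |derivWithin f (Set.Icc 0 ymax) y|) '' Set.Icc 0 ymax))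
    (hKg' : Kg' = sSup ((fun x => |derivWithin g (Set.Icc 0 xmax) x|) '' Set.Icc 0 xmax))
    (hKg'' : Kg'' = sSup ((fun x =>
        |derivWithin (derivWithin g (Set.Icc 0 xmax)) (Set.Icc 0 xmax) x|) '' Set.Icc 0 xmax))
    (hK : K = Kg'' * xmax + Kg' + Kf' * Kg' ^ 2)
    (x : Fin (N + w - 1) → ℝ) (hx : ∀ i, x i ∈ Set.Icc 0 xmax)
    (Hess : Matrix (Fin (N + w - 1)) (Fin (N + w - 1)) ℝ)
    (hHess : ∀ m i, Hess m i
        = fderiv ℝ (fun y => fderiv ℝ (Uc w N f g) y (Pi.single i 1)) x (Pi.single m 1)) :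
    (∀ v : Fin (N + w - 1) → ℝ,
        (∑ i, |Hess.mulVec v i|) ≤ K * ∑ i, |v i|)
    ∧ (∀ v : Fin (N + w - 1) → ℝ,
        Real.sqrt (∑ i, (Hess.mulVec v i) ^ 2) ≤ K * Real.sqrt (∑ i, (v i) ^ 2))
    ∧ (∀ v : Fin (N + w - 1) → ℝ, ∀ i,
        |Hess.mulVec v i| ≤ K * ⨆ j, |v j|) := by
  subst hK
  have hI := uniqueDiffOn_Icc hxmax
  have hg'_C1 := hg_C2.derivWithin hI (m := 1) (by norm_num)
  have hbf : ∀ t ∈ Icc 0 ymax, |derivWithin f (Icc 0 ymax) t| ≤ Kf' := fun t ht => hKf' ▸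
    abs_le_sSup_image_abs isCompact_Icc
      (hf_C1.continuousOn_derivWithin (uniqueDiffOn_Icc hymax) le_rfl) ht
  have hbg : ∀ t ∈ Icc 0 xmax, |derivWithin g (Icc 0 xmax) t| ≤ Kg' := fun t ht => hKg' ▸
    abs_le_sSup_image_abs isCompact_Icc (hg_C2.continuousOn_derivWithin hI one_le_two) ht
  have hbg' : ∀ t ∈ Icc 0 xmax, |derivWithin (derivWithin g (Icc 0 xmax)) (Icc 0 xmax) t| ≤ Kg'' :=
    fun t ht => hKg'' ▸
      abs_le_sSup_image_abs isCompact_Icc (hg'_C1.continuousOn_derivWithin hI le_rfl) ht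
  have hKf'0 : 0 ≤ Kf' := (abs_nonneg _).trans (hbf 0 (left_mem_Icc.2 hymax.le))
  have hKg'0 : 0 ≤ Kg' := (abs_nonneg _).trans (hbg 0 (left_mem_Icc.2 hxmax.le))
  have hKg''0 : 0 ≤ Kg'' := (abs_nonneg _).trans (hbg' 0 (left_mem_Icc.2 hxmax.le))
  have hg_Ioo : MapsTo g (Ioo 0 xmax) (Ioo 0 ymax) := hg_strict.mapsTo_Ioo.mono_right
    (Ioo_subset_Ioo (hg_maps (left_mem_Icc.2 hxmax.le)).1 hg_top.le)
  obtain ⟨hrow, hcol⟩ := sum_abs_le_of_abs_le_diag_add_gram (H := Hess) (Amat_row_sum hw)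
    Amat_col_sum_le (d := Kf' * Kg' ^ 2) (by positivity) fun m i => by
      rw [hHess, Uc_eq_coupledPotential]
      exact abs_fderiv_fderiv_coupledPotential_apply_single_le hxmax Amat_nonneg (Amat_row_sum hw)
        Amat_col_sum_le (hf_C1.differentiableOn one_ne_zero) hf_maps
        (hg_C2.differentiableOn two_ne_zero) (hg'_C1.differentiableOn one_ne_zero) hg_maps hg_Ioo
        hKf'0 hbf hbg hbg' (fun i _ => hx i) m i
  exact ⟨fun v => sum_abs_mulVec_le Hess v hcol,
    fun v => sqrt_sum_sq_mulVec_le Hess v (by positivity) hrow hcol,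
    fun v => abs_mulVec_le_mul_iSup Hess v hrow⟩

/-- **Lemma (coupled_scalar_hessian_bound).** For all `x ∈ X^M` and `p ∈ {1,2,∞}`,
the Hessian matrix `U_c''(x)` satisfies `‖U_c''(x)‖_p ≤ K_{f,g}` with
`K_{f,g} = ‖g''‖_∞ x_max + ‖g'‖_∞ + ‖f'‖_∞ ‖g'‖_∞²`.  The operator-norm bounds are
expressed as `‖U_c''(x) v‖_p ≤ K_{f,g} ‖v‖_p` for every vector `v`. -/
theorem stmt_11
    (xmax ymax : ℝ) (hxmax : 0 < xmax) (hymax : 0 < ymax)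
    (f g : ℝ → ℝ)
    (hf_maps : Set.MapsTo f (Set.Icc 0 ymax) (Set.Icc 0 xmax))
    (hf_mono : MonotoneOn f (Set.Icc 0 ymax))
    (hf_C1 : ContDiffOn ℝ 1 f (Set.Icc 0 ymax))
    (hg_maps : Set.MapsTo g (Set.Icc 0 xmax) (Set.Icc 0 ymax))
    (hg_strict : StrictMonoOn g (Set.Icc 0 xmax))
    (hg_C2 : ContDiffOn ℝ 2 g (Set.Icc 0 xmax))
    (hg_top : g xmax = ymax)
    (w N : ℕ) (hw : 1 ≤ w) (hN : 1 ≤ N)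
    (Kf' Kg' Kg'' K : ℝ)
    (hKf' : Kf' = sSup ((fun y => |derivWithin f (Set.Icc 0 ymax) y|) '' Set.Icc 0 ymax))
    (hKg' : Kg' = sSup ((fun x => |derivWithin g (Set.Icc 0 xmax) x|) '' Set.Icc 0 xmax))
    (hKg'' : Kg'' = sSup ((fun x =>
        |derivWithin (derivWithin g (Set.Icc 0 xmax)) (Set.Icc 0 xmax) x|) '' Set.Icc 0 xmax))
    (hK : K = Kg'' * xmax + Kg' + Kf' * Kg' ^ 2)
    (x : Fin (N + w - 1) → ℝ) (hx : ∀ i, x i ∈ Set.Icc 0 xmax)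
    (Hess : Matrix (Fin (N + w - 1)) (Fin (N + w - 1)) ℝ)
    (hHess : ∀ m i, Hess m i
        = fderiv ℝ (fun y => fderiv ℝ (Uc w N f g) y (Pi.single i 1)) x (Pi.single m 1)) :
    (∀ v : Fin (N + w - 1) → ℝ,
        (∑ i, |Hess.mulVec v i|) ≤ K * ∑ i, |v i|)
    ∧ (∀ v : Fin (N + w - 1) → ℝ,
        Real.sqrt (∑ i, (Hess.mulVec v i) ^ 2) ≤ K * Real.sqrt (∑ i, (v i) ^ 2))
    ∧ (∀ v : Fin (N + w - 1) → ℝ, ∀ i,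
        |Hess.mulVec v i| ≤ K * ⨆ j, |v j|) :=
  stmt_11_general xmax ymax hxmax hymax f g hf_maps hf_C1 hg_maps hg_strict hg_C2 hg_top w N hw Kf'
    Kg' Kg'' K hKf' hKg' hKg'' hK x hx Hess hHess
end

section
/- Let x̲* = min{x ∈ X : U_s(x) = min_{z∈X} U_s(z)}. Then: (1) U_s(x) > U_s(x̲*) for all x ∈ [0, x̲*); (2) if x ∈ X^M satisfies x ⪰ Aᵀ f(A g(x)) componentwise, then U_c(Aᵀ f(A g(x))) ≤ U_c(x); (3) for every x ∈ X^M, U_c(x) ≥ Σ_{i=1}^M U_s(x_i); (4) for a constant vector x = (x, …, x)ᵀ ∈ X^M, U_c(x) = M·U_s(x) + (w−1)·F(g(x)). -/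
open Set Filter

/-- The coupled update `h(x) = Aᵀ f(A g(x))`. -/
noncomputable def coupledMap (w N : ℕ) (f g : ℝ → ℝ)
    (x : Fin (N + w - 1) → ℝ) : Fin (N + w - 1) → ℝ :=
  fun i => ∑ j : Fin N, Amat w N j i * f (∑ k, Amat w N j k * g (x k))

lemma amat_nonneg (w N : ℕ) (j : Fin N) (k : Fin (N + w - 1)) : 0 ≤ Amat w N j k := by
  unfold Amat; split <;> positivity

lemma amat_row_sum (w N : ℕ) (hw : 1 ≤ w) (hN : 1 ≤ N) (j : Fin N) :
    ∑ k, Amat w N j k = 1 := by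
  have hj := j.2
  have hjw : (j:ℕ) + w ≤ N + w - 1 := by omega
  have h1 : ∑ k : Fin (N + w - 1), Amat w N j k
      = ∑ i ∈ Finset.range (N + w - 1),
          (if (j:ℕ) ≤ i ∧ i < (j:ℕ) + w then (w : ℝ)⁻¹ else 0) := by
    rw [← Fin.sum_univ_eq_sum_range]
    rfl
  rw [h1]
  have h2 : ∀ i, ((j:ℕ) ≤ i ∧ i < (j:ℕ) + w) ↔ i ∈ Finset.Ico (j:ℕ) ((j:ℕ)+w) := by
    intro i; simp [Finset.mem_Ico]
  simp_rw [h2]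
  rw [Finset.sum_ite_mem]
  have h3 : Finset.range (N + w - 1) ∩ Finset.Ico (j:ℕ) ((j:ℕ)+w)
      = Finset.Ico (j:ℕ) ((j:ℕ)+w) := by
    apply Finset.inter_eq_right.mpr
    intro i hi
    simp only [Finset.mem_Ico] at hi
    simp only [Finset.mem_range]
    omega
  rw [h3, Finset.sum_const, Nat.card_Ico]
  have : (j:ℕ) + w - (j:ℕ) = w := by omega
  rw [this, nsmul_eq_mul]
  field_simp

lemma amat_col_sum_le (w N : ℕ) (hw : 1 ≤ w) (k : Fin (N + w - 1)) :
    ∑ j, Amat w N j k ≤ 1 := by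
  have h1 : ∑ j : Fin N, Amat w N j k
      = ∑ i ∈ Finset.range N,
          (if i ≤ (k:ℕ) ∧ (k:ℕ) < i + w then (w : ℝ)⁻¹ else 0) := by
    rw [← Fin.sum_univ_eq_sum_range]
    rfl
  rw [h1]
  have h2 : ∀ i, (i ≤ (k:ℕ) ∧ (k:ℕ) < i + w) ↔ i ∈ Finset.Icc ((k:ℕ)+1-w) (k:ℕ) := by
    intro i; simp only [Finset.mem_Icc]; omega
  simp_rw [h2]
  rw [Finset.sum_ite_mem]
  calc ∑ i ∈ Finset.range N ∩ Finset.Icc ((k:ℕ)+1-w) (k:ℕ), (w:ℝ)⁻¹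
      ≤ ∑ i ∈ Finset.Icc ((k:ℕ)+1-w) (k:ℕ), (w:ℝ)⁻¹ := by
        apply Finset.sum_le_sum_of_subset_of_nonneg (Finset.inter_subset_right)
        intro i _ _; positivity
    _ ≤ 1 := by
        rw [Finset.sum_const, Nat.card_Icc, nsmul_eq_mul]
        have hcard : (k:ℕ) + 1 - ((k:ℕ)+1-w) ≤ w := by omega
        calc ((k:ℕ) + 1 - ((k:ℕ)+1-w) : ℕ) * (w:ℝ)⁻¹ ≤ (w:ℕ) * (w:ℝ)⁻¹ := by
              apply mul_le_mul_of_nonneg_right _ (by positivity)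
              exact_mod_cast hcard
          _ = 1 := by field_simp

/-- Tangent-line inequality for the antiderivative of a monotone function. -/
lemma tangent_line (f : ℝ → ℝ) (c : ℝ) (hc : ContinuousOn f (Icc 0 c))
    (hm : MonotoneOn f (Icc 0 c)) {s u : ℝ} (hs : s ∈ Icc 0 c) (hu : u ∈ Icc 0 c) :
    f s * (u - s) ≤ (∫ z in (0:ℝ)..u, f z) - ∫ z in (0:ℝ)..s, f z := by
  have hint : ∀ a b : ℝ, a ∈ Icc 0 c → b ∈ Icc 0 c → IntervalIntegrable f MeasureTheory.volume a b := by
    intro a b ha hb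
    apply (hc.mono _).intervalIntegrable
    exact uIcc_subset_Icc ha hb
  have h0 : (0:ℝ) ∈ Icc 0 c := ⟨le_refl _, hs.1.trans hs.2⟩
  have hsplit : (∫ z in (0:ℝ)..s, f z) + (∫ z in s..u, f z) = ∫ z in (0:ℝ)..u, f z :=
    intervalIntegral.integral_add_adjacent_intervals (hint 0 s h0 hs) (hint s u hs hu)
  have key : f s * (u - s) ≤ ∫ z in s..u, f z := by
    rcases le_total s u with h | h
    · have : ∫ z in s..u, (f s) ≤ ∫ z in s..u, f z := by
        apply intervalIntegral.integral_mono_on h (intervalIntegrable_const) (hint s u hs hu)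
        intro z hz
        exact hm hs ⟨hs.1.trans hz.1, hz.2.trans hu.2⟩ hz.1
      simpa [mul_comm] using this
    · rw [intervalIntegral.integral_symm u s]
      have : ∫ z in u..s, f z ≤ ∫ z in u..s, (f s) := by
        apply intervalIntegral.integral_mono_on h (hint u s hu hs) (intervalIntegrable_const)
        intro z hz
        exact hm ⟨hu.1.trans hz.1, hz.2.trans hs.2⟩ hs hz.2
      simp only [intervalIntegral.integral_const, smul_eq_mul] at this
      nlinarith
  linarith


/-- **Lemma (U_vec_bound).** With `x̲*` the smallest minimizer of `U_s`:
(1) `U_s(x) > U_s(x̲*)` for all `x ∈ [0, x̲*)`;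
(2) if `x ⪰ Aᵀf(Ag(x))` then `U_c(Aᵀf(Ag(x))) ≤ U_c(x)`;
(3) for every `x ∈ X^M`, `U_c(x) ≥ Σᵢ U_s(xᵢ)`;
(4) for a constant vector `x = c·1`, `U_c(x) = M·U_s(c) + (w−1)·F(g(c))`. -/
theorem stmt_14
    (xmax ymax : ℝ) (hxmax : 0 < xmax) (hymax : 0 < ymax)
    (f g : ℝ → ℝ)
    (hf_maps : Set.MapsTo f (Set.Icc 0 ymax) (Set.Icc 0 xmax))
    (hf_mono : MonotoneOn f (Set.Icc 0 ymax))
    (hf_C1 : ContDiffOn ℝ 1 f (Set.Icc 0 ymax))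
    (hg_maps : Set.MapsTo g (Set.Icc 0 xmax) (Set.Icc 0 ymax))
    (hg_strict : StrictMonoOn g (Set.Icc 0 xmax))
    (hg_C2 : ContDiffOn ℝ 2 g (Set.Icc 0 xmax))
    (hg_top : g xmax = ymax)
    (Us : ℝ → ℝ)
    (hUs : ∀ x : ℝ, Us x = x * g x - (∫ z in (0:ℝ)..x, g z) - ∫ z in (0:ℝ)..(g x), f z)
    (xund : ℝ) (hxund_mem : xund ∈ Set.Icc 0 xmax)
    (hxund_min : ∀ z ∈ Set.Icc 0 xmax, Us xund ≤ Us z)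
    (hxund_least : ∀ x ∈ Set.Icc 0 xmax, (∀ z ∈ Set.Icc 0 xmax, Us x ≤ Us z) → xund ≤ x)
    (w N : ℕ) (hw : 1 ≤ w) (hN : 1 ≤ N) :
    (∀ x ∈ Set.Ico (0:ℝ) xund, Us xund < Us x)
    ∧ (∀ x : Fin (N + w - 1) → ℝ, (∀ i, x i ∈ Set.Icc 0 xmax) →
        (∀ i, coupledMap w N f g x i ≤ x i) →
        Uc w N f g (coupledMap w N f g x) ≤ Uc w N f g x)
    ∧ (∀ x : Fin (N + w - 1) → ℝ, (∀ i, x i ∈ Set.Icc 0 xmax) →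
        (∑ i, Us (x i)) ≤ Uc w N f g x)
    ∧ (∀ c ∈ Set.Icc (0:ℝ) xmax,
        Uc w N f g (fun _ => c)
          = (N + w - 1 : ℕ) * Us c + ((w : ℝ) - 1) * ∫ z in (0:ℝ)..(g c), f z) := by
  have hgc : ContinuousOn g (Icc 0 xmax) := hg_C2.continuousOn
  have hfc : ContinuousOn f (Icc 0 ymax) := hf_C1.continuousOn
  have hgm : MonotoneOn g (Icc 0 xmax) := hg_strict.monotoneOn
  have h0y : (0:ℝ) ∈ Icc 0 ymax := ⟨le_refl _, hymax.le⟩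
  have h0x : (0:ℝ) ∈ Icc 0 xmax := ⟨le_refl _, hxmax.le⟩
  -- membership of s j := ∑ k A j k * g (x k)
  have hs_mem : ∀ (x : Fin (N + w - 1) → ℝ), (∀ i, x i ∈ Icc 0 xmax) →
      ∀ j : Fin N, (∑ k, Amat w N j k * g (x k)) ∈ Icc 0 ymax := by
    intro x hx j
    constructor
    · apply Finset.sum_nonneg
      intro k _
      exact mul_nonneg (amat_nonneg w N j k) (hg_maps (hx k)).1
    · calc ∑ k, Amat w N j k * g (x k) ≤ ∑ k, Amat w N j k * ymax := by
            apply Finset.sum_le_sum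
            intro k _
            exact mul_le_mul_of_nonneg_left (hg_maps (hx k)).2 (amat_nonneg w N j k)
        _ = ymax := by rw [← Finset.sum_mul, amat_row_sum w N hw hN, one_mul]
  -- membership of the coupled image
  have hy_mem : ∀ (x : Fin (N + w - 1) → ℝ), (∀ i, x i ∈ Icc 0 xmax) →
      ∀ i, coupledMap w N f g x i ∈ Icc 0 xmax := by
    intro x hx i
    have hfs : ∀ j : Fin N, f (∑ k, Amat w N j k * g (x k)) ∈ Icc 0 xmax :=
      fun j => hf_maps (hs_mem x hx j)
    constructor
    · apply Finset.sum_nonneg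
      intro j _
      exact mul_nonneg (amat_nonneg w N j i) (hfs j).1
    · calc (∑ j, Amat w N j i * f (∑ k, Amat w N j k * g (x k)))
          ≤ ∑ j, Amat w N j i * xmax := by
            apply Finset.sum_le_sum
            intro j _
            exact mul_le_mul_of_nonneg_left (hfs j).2 (amat_nonneg w N j i)
        _ = (∑ j, Amat w N j i) * xmax := by rw [Finset.sum_mul]
        _ ≤ 1 * xmax :=
            mul_le_mul_of_nonneg_right (amat_col_sum_le w N hw i) hxmax.le
        _ = xmax := one_mul xmax
  refine ⟨?_, ?_, ?_, ?_⟩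
  · -- part 1
    intro x hx
    rcases lt_or_ge (Us xund) (Us x) with h | h
    · exact h
    · exfalso
      have hxmem : x ∈ Icc 0 xmax := ⟨hx.1, hx.2.le.trans hxund_mem.2⟩
      have hmin : ∀ z ∈ Icc 0 xmax, Us x ≤ Us z := fun z hz => h.trans (hxund_min z hz)
      have := hxund_least x hxmem hmin
      linarith [hx.2]
  · -- part 2
    intro x hx _
    set y : Fin (N + w - 1) → ℝ := coupledMap w N f g x with hy
    have hym : ∀ i, y i ∈ Icc 0 xmax := hy_mem x hx
    set s : Fin N → ℝ := fun j => ∑ k, Amat w N j k * g (x k) with hsdef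
    set t : Fin N → ℝ := fun j => ∑ k, Amat w N j k * g (y k) with htdef
    have hsm : ∀ j, s j ∈ Icc 0 ymax := hs_mem x hx
    have htm : ∀ j, t j ∈ Icc 0 ymax := hs_mem y hym
    have hyk : ∀ k, y k = ∑ j, Amat w N j k * f (s j) := fun k => rfl
    -- claim A
    have hA : ∀ i, y i * (g (x i) - g (y i))
        ≤ (g (x i) * x i - ∫ z in (0:ℝ)..(x i), g z)
          - (g (y i) * y i - ∫ z in (0:ℝ)..(y i), g z) := by
      intro i
      have := tangent_line g xmax hgc hgm (hx i) (hym i)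
      nlinarith [this]
    -- claim B
    have hB : ∀ j, ((∫ z in (0:ℝ)..(s j), f z) - ∫ z in (0:ℝ)..(t j), f z)
        ≤ f (s j) * (s j - t j) := by
      intro j
      have := tangent_line f ymax hfc hf_mono (hsm j) (htm j)
      linarith
    -- claim C : the two bounds coincide
    have hC : ∑ j, f (s j) * (s j - t j) = ∑ i, y i * (g (x i) - g (y i)) := by
      have step1 : ∀ j : Fin N, f (s j) * (s j - t j)
          = ∑ k, Amat w N j k * f (s j) * (g (x k) - g (y k)) := by
        intro j
        have : s j - t j = ∑ k, Amat w N j k * (g (x k) - g (y k)) := by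
          rw [hsdef, htdef]
          simp only [mul_sub]
          rw [Finset.sum_sub_distrib]
        rw [this, Finset.mul_sum]
        apply Finset.sum_congr rfl
        intro k _; ring
      calc ∑ j, f (s j) * (s j - t j)
          = ∑ j, ∑ k, Amat w N j k * f (s j) * (g (x k) - g (y k)) :=
            Finset.sum_congr rfl fun j _ => step1 j
        _ = ∑ k, ∑ j, Amat w N j k * f (s j) * (g (x k) - g (y k)) := Finset.sum_comm
        _ = ∑ k, y k * (g (x k) - g (y k)) := by
            apply Finset.sum_congr rfl
            intro k _
            rw [hyk k, Finset.sum_mul]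
    have hA' : ∑ i, y i * (g (x i) - g (y i))
        ≤ (∑ i, (g (x i) * x i - ∫ z in (0:ℝ)..(x i), g z))
          - ∑ i, (g (y i) * y i - ∫ z in (0:ℝ)..(y i), g z) := by
      rw [← Finset.sum_sub_distrib]
      exact Finset.sum_le_sum fun i _ => hA i
    have hB' : (∑ j, ∫ z in (0:ℝ)..(s j), f z) - ∑ j, ∫ z in (0:ℝ)..(t j), f z
        ≤ ∑ j, f (s j) * (s j - t j) := by
      rw [← Finset.sum_sub_distrib]
      exact Finset.sum_le_sum fun j _ => hB j
    have e1 : Uc w N f g x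
        = (∑ i, (g (x i) * x i - ∫ z in (0:ℝ)..(x i), g z))
          - ∑ j, ∫ z in (0:ℝ)..(s j), f z := rfl
    have e2 : Uc w N f g y
        = (∑ i, (g (y i) * y i - ∫ z in (0:ℝ)..(y i), g z))
          - ∑ j, ∫ z in (0:ℝ)..(t j), f z := rfl
    rw [e1, e2]
    linarith
  · -- part 3
    intro x hx
    set s : Fin N → ℝ := fun j => ∑ k, Amat w N j k * g (x k) with hsdef
    have hsm : ∀ j, s j ∈ Icc 0 ymax := hs_mem x hx
    have hgx : ∀ i, g (x i) ∈ Icc 0 ymax := fun i => hg_maps (hx i)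
    have hFnonneg : ∀ i, 0 ≤ ∫ z in (0:ℝ)..(g (x i)), f z := by
      intro i
      have h := tangent_line f ymax hfc hf_mono h0y (hgx i)
      have hf0 : 0 ≤ f 0 := (hf_maps h0y).1
      have : (∫ z in (0:ℝ)..(0:ℝ), f z) = 0 := intervalIntegral.integral_same
      nlinarith [(hgx i).1]
    -- Jensen per row
    have hJ : ∀ j : Fin N, (∫ z in (0:ℝ)..(s j), f z)
        ≤ ∑ k, Amat w N j k * ∫ z in (0:ℝ)..(g (x k)), f z := by
      intro j
      have hterm : ∀ k, Amat w N j k * ((∫ z in (0:ℝ)..(s j), f z) + f (s j) * (g (x k) - s j))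
          ≤ Amat w N j k * ∫ z in (0:ℝ)..(g (x k)), f z := by
        intro k
        apply mul_le_mul_of_nonneg_left _ (amat_nonneg w N j k)
        have := tangent_line f ymax hfc hf_mono (hsm j) (hgx k)
        linarith
      have hexp : ∑ k, Amat w N j k * ((∫ z in (0:ℝ)..(s j), f z) + f (s j) * (g (x k) - s j))
          = ∫ z in (0:ℝ)..(s j), f z := by
        have hrs := amat_row_sum w N hw hN j
        have h2 : ∑ k, Amat w N j k * g (x k) = s j := rfl
        calc ∑ k, Amat w N j k * ((∫ z in (0:ℝ)..(s j), f z) + f (s j) * (g (x k) - s j))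
            = ∑ k, (Amat w N j k * ((∫ z in (0:ℝ)..(s j), f z) - f (s j) * s j)
                + f (s j) * (Amat w N j k * g (x k))) :=
              Finset.sum_congr rfl (fun k _ => by ring)
          _ = (∑ k, Amat w N j k) * ((∫ z in (0:ℝ)..(s j), f z) - f (s j) * s j)
                + f (s j) * ∑ k, Amat w N j k * g (x k) := by
              rw [Finset.sum_add_distrib, Finset.sum_mul, Finset.mul_sum]
          _ = ∫ z in (0:ℝ)..(s j), f z := by rw [hrs, h2]; ring
      calc (∫ z in (0:ℝ)..(s j), f z)
          = ∑ k, Amat w N j k * ((∫ z in (0:ℝ)..(s j), f z) + f (s j) * (g (x k) - s j)) :=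
            hexp.symm
        _ ≤ ∑ k, Amat w N j k * ∫ z in (0:ℝ)..(g (x k)), f z :=
            Finset.sum_le_sum fun k _ => hterm k
    have hJen : ∑ j, (∫ z in (0:ℝ)..(s j), f z) ≤ ∑ i, ∫ z in (0:ℝ)..(g (x i)), f z := by
      calc ∑ j, (∫ z in (0:ℝ)..(s j), f z)
          ≤ ∑ j, ∑ k, Amat w N j k * ∫ z in (0:ℝ)..(g (x k)), f z :=
            Finset.sum_le_sum fun j _ => hJ j
        _ = ∑ k, (∑ j, Amat w N j k) * ∫ z in (0:ℝ)..(g (x k)), f z := by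
            rw [Finset.sum_comm]
            exact Finset.sum_congr rfl fun k _ => (Finset.sum_mul _ _ _).symm
        _ ≤ ∑ k, ∫ z in (0:ℝ)..(g (x k)), f z := by
            apply Finset.sum_le_sum
            intro k _
            calc (∑ j, Amat w N j k) * ∫ z in (0:ℝ)..(g (x k)), f z
                ≤ 1 * ∫ z in (0:ℝ)..(g (x k)), f z :=
                  mul_le_mul_of_nonneg_right (amat_col_sum_le w N hw k) (hFnonneg k)
              _ = _ := one_mul _
    have hUsum : ∑ i, Us (x i)
        = (∑ i, (g (x i) * x i - ∫ z in (0:ℝ)..(x i), g z))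
          - ∑ i, ∫ z in (0:ℝ)..(g (x i)), f z := by
      rw [← Finset.sum_sub_distrib]
      apply Finset.sum_congr rfl
      intro i _
      rw [hUs]; ring
    have e1 : Uc w N f g x
        = (∑ i, (g (x i) * x i - ∫ z in (0:ℝ)..(x i), g z))
          - ∑ j, ∫ z in (0:ℝ)..(s j), f z := rfl
    rw [e1, hUsum]
    linarith
  · -- part 4
    intro c hc
    have hrow : ∀ j : Fin N, ∑ k, Amat w N j k * g c = g c := by
      intro j
      rw [← Finset.sum_mul, amat_row_sum w N hw hN, one_mul]
    have e : Uc w N f g (fun _ => c)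
        = ((N + w - 1 : ℕ) : ℝ) * (g c * c - ∫ z in (0:ℝ)..c, g z)
          - (N : ℝ) * ∫ z in (0:ℝ)..(g c), f z := by
      unfold Uc
      simp only [hrow, Finset.sum_const, Finset.card_univ, Fintype.card_fin, nsmul_eq_mul]
    rw [e, hUs c]
    have hM : ((N + w - 1 : ℕ) : ℝ) = (N : ℝ) + (w : ℝ) - 1 := by
      have h1 : N + w - 1 + 1 = N + w := by omega
      have := congrArg (fun n : ℕ => (n : ℝ)) h1
      push_cast at this
      linarith
    rw [hM]
    ring
end
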